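/- arXiv:1611.08421 — 2 statements merged into one kernel-verified Lean document; each statement's English description precedes it below -/
import Mathlib

section
/- Let F be a finite field of odd cardinality and let P ∈ F[X] be a monic irreducible self-dual polynomial (meaning P(0) ≠ 0 and P(X) = P(0)^{-1} X^{deg P} P(1/X)). Then either P(X) = X - 1, or P(X) = X + 1, or deg P is even. -/
/-!
Inversion permutes the roots of a self-dual polynomial in its splitting field. A fixed point
`β = β⁻¹` is `±1`, and an irreducible monic polynomial with root `±1` is `X ∓ 1`. Otherwise
inversion is a fixed-point-free involution on the `deg P` distinct roots (finite fields are
perfect), so `deg P` is even.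
-/

open Polynomial

theorem Function.Involutive.even_card_of_forall_ne {α : Type*} [Fintype α] {g : α → α}
    (hg : Function.Involutive g) (hne : ∀ a, g a ≠ a) : Even (Fintype.card α) := by
  classical
  rw [← ZMod.natCast_eq_zero_iff_even, Fintype.card_eq_sum_ones, Nat.cast_sum]
  exact Finset.sum_ninvolution g (fun _ => by decide) (fun a _ => hne a)
    (fun _ => Finset.mem_univ _) hg

theorem Polynomial.aeval_inv_eq_zero_of_eq_C_mul_reverse {F K : Type*} [Field F] [Field K]
    [Algebra F K] {P : F[X]} {c : F} (hc : c ≠ 0) (hP : P = C c * P.reverse) {β : K}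
    (hβ : aeval β P = 0) : aeval β⁻¹ P = 0 := by
  rcases eq_or_ne β 0 with rfl | hβ0
  · simpa using hβ
  have hrev : aeval β P.reverse = 0 := by
    rw [hP, map_mul, aeval_C, mul_eq_zero] at hβ
    exact hβ.resolve_left (by simpa using hc)
  let : Invertible β⁻¹ := invertibleOfNonzero (inv_ne_zero hβ0)
  rw [aeval_def, ← eval₂_reverse_eq_zero_iff, invOf_eq_inv, inv_inv, ← aeval_def]
  exact hrev

theorem Polynomial.eq_X_sub_one_or_eq_X_add_one_of_aeval_eq_zero {F K : Type*} [Field F]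
    [Field K] [Algebra F K] {P : F[X]} (hmonic : P.Monic) (hirr : Irreducible P) {β : K}
    (hβ : aeval β P = 0) (hβ2 : β * β = 1) : P = X - 1 ∨ P = X + 1 := by
  have hmin : P = minpoly F β := minpoly.eq_of_irreducible_of_monic hirr hβ hmonic
  rcases mul_self_eq_one_iff.1 hβ2 with rfl | rfl
  · left
    rw [hmin, ← map_one (algebraMap F K), minpoly.eq_X_sub_C, map_one]
  · right
    rw [hmin, ← map_one (algebraMap F K), ← map_neg, minpoly.eq_X_sub_C, map_neg, map_one,
      sub_neg_eq_add]

theorem stmt_7_general (F : Type*) [Field F] [Fintype F]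
    (P : F[X]) (hmonic : P.Monic) (hirr : Irreducible P) (h0 : P.eval 0 ≠ 0)
    (hsd : P = C (P.eval 0)⁻¹ * P.reverse) :
    P = X - 1 ∨ P = X + 1 ∨ Even P.natDegree := by
  let L := P.SplittingField
  have hinv : ∀ β ∈ P.rootSet L, β⁻¹ ∈ P.rootSet L := fun β hβ => by
    rw [mem_rootSet] at hβ ⊢
    exact ⟨hβ.1, aeval_inv_eq_zero_of_eq_C_mul_reverse (inv_ne_zero h0) hsd hβ.2⟩
  by_cases hfix : ∃ β ∈ P.rootSet L, β⁻¹ = β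
  · obtain ⟨β, hβ, hββ⟩ := hfix
    have hβ0 : β ≠ 0 := by
      rintro rfl
      have hP0 := aeval_eq_zero_of_mem_rootSet hβ
      rw [← coeff_zero_eq_aeval_zero', coeff_zero_eq_eval_zero, map_eq_zero] at hP0
      exact h0 hP0
    exact or_assoc.1 <| .inl <| eq_X_sub_one_or_eq_X_add_one_of_aeval_eq_zero hmonic hirr
      (aeval_eq_zero_of_mem_rootSet hβ) (by simpa [hββ] using inv_mul_cancel₀ hβ0)
  · push Not at hfix
    right; right
    rw [← card_rootSet_eq_natDegree (PerfectField.separable_of_irreducible hirr)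
      (SplittingField.splits P)]
    exact Function.Involutive.even_card_of_forall_ne
      (g := fun β : P.rootSet L => ⟨β⁻¹, hinv β β.2⟩)
      (fun β => Subtype.ext (inv_inv _)) (fun β h => hfix β β.2 (congrArg Subtype.val h))

theorem stmt_7 (F : Type*) [Field F] [Fintype F] (hodd : Odd (Fintype.card F))
    (P : F[X]) (hmonic : P.Monic) (hirr : Irreducible P) (h0 : P.eval 0 ≠ 0)
    (hsd : P = C (P.eval 0)⁻¹ * P.reverse) :
    P = X - 1 ∨ P = X + 1 ∨ Even P.natDegree :=
  stmt_7_general F P hmonic hirr h0 hsd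
end

section
/- Let F_q ⊂ F_{q^2} be finite fields of odd characteristic with [F_{q^2} : F_q] = 2, and let σ be the nontrivial element of Gal(F_{q^2}/F_q). Let P ∈ F_{q^2}[X] be a monic irreducible polynomial with P(0) ≠ 0 satisfying P(X) = σ(P(0))^{-1} X^{deg P} σ(P)(1/X), where σ(P) applies σ to all coefficients. Then deg P is odd. -/
/-!
Since `Gal(E/F)` has order two, `σ` is the Frobenius `a ↦ a ^ q`, and self-duality says that with a
root `ζ` of `P`, `(ζ ^ q)⁻¹` is a root as well. In `K = E(ζ)` the `E`-automorphism `ψ : ζ ↦ (ζ ^ q)⁻¹`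
satisfies `ψ² = φ`, the Frobenius `x ↦ x ^ (q²)`, which generates the cyclic group `Gal(K/E)` of
order `deg P`. A generator of a cyclic group which is a square there has odd order.
-/

open Polynomial

namespace Polynomial

variable {R : Type*} [Field R]

noncomputable def dual (σ : R →+* R) (P : R[X]) : R[X] :=
  C (σ (P.eval 0))⁻¹ * (P.map σ).reverse

theorem aeval_inv_dual_eq_zero {K : Type*} [Field K] [Algebra R K] {σ : R →+* R} {Φ : K →+* K}
    (hΦ : (algebraMap R K).comp σ = Φ.comp (algebraMap R K)) {P : R[X]} {x : K} (hx : x ≠ 0)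
    (hroot : aeval x P = 0) : aeval (Φ x)⁻¹ (dual σ P) = 0 := by
  let : Invertible (Φ x) := invertibleOfNonzero ((_root_.map_ne_zero Φ).mpr hx)
  have hrev : eval₂ (algebraMap R K) (⅟(Φ x)) (P.map σ).reverse = 0 := by
    rw [eval₂_reverse_eq_zero_iff, eval₂_map, hΦ, ← hom_eval₂, ← aeval_def, hroot, map_zero]
  rw [dual, aeval_def, eval₂_mul, ← invOf_eq_inv, hrev, mul_zero]

theorem aeval_inv_pow_card_eq_zero {F E K : Type*} [Field F] [Fintype F] [Field E] [Field K]
    [Algebra E K] [Algebra F K] {σ : E →+* E} (hσ : ∀ a, σ a = a ^ Fintype.card F) {P : E[X]}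
    (hP : P = dual σ P) {x : K} (hx : x ≠ 0) (hroot : aeval x P = 0) :
    aeval (x ^ Fintype.card F)⁻¹ P = 0 := by
  have hΦ : (algebraMap E K).comp σ =
      (FiniteField.frobeniusAlgHom F K : K →+* K).comp (algebraMap E K) := by
    ext a
    simp [hσ, FiniteField.coe_frobeniusAlgHom]
  rw [hP]
  exact aeval_inv_dual_eq_zero hΦ hx hroot

end Polynomial

theorem odd_orderOf_of_sq_eq {G : Type*} [Group G] {g h : G}
    (hh : h ∈ Subgroup.zpowers g) (hsq : h ^ 2 = g) : Odd (orderOf g) := by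
  obtain ⟨k, rfl⟩ := Subgroup.mem_zpowers_iff.mp hh
  have hfix : g ^ (2 * k - 1) = 1 := by
    rw [zpow_sub_one, mul_inv_eq_one, mul_comm, zpow_mul, zpow_ofNat]
    simpa only [← zpow_natCast, ← zpow_mul, mul_comm] using hsq
  obtain ⟨m, hm⟩ := orderOf_dvd_iff_zpow_eq_one.mpr hfix
  have hodd : Odd ((orderOf g : ℤ) * m) := hm ▸ ⟨k - 1, by ring⟩
  exact (Int.odd_coe_nat _).mp (Int.odd_mul.mp hodd).1

theorem FiniteField.algEquiv_eq_frobenius_of_finrank_eq_two {F E : Type*} [Field F] [Fintype F]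
    [Field E] [Finite E] [Algebra F E] (hrank : Module.finrank F E = 2) {σ : E ≃ₐ[F] E}
    (hσ : σ ≠ 1) : σ = FiniteField.frobeniusAlgEquivOfAlgebraic F E := by
  obtain ⟨⟨n, hn⟩, rfl⟩ := (FiniteField.bijective_frobeniusAlgEquivOfAlgebraic_pow F E).2 σ
  rw [hrank] at hn
  interval_cases n
  · exact absurd (pow_zero _) hσ
  · exact pow_one _

theorem FiniteField.mem_zpowers_frobeniusAlgEquivOfAlgebraic {K L : Type*} [Field K] [Fintype K]
    [Field L] [Finite L] [Algebra K L] (ψ : L ≃ₐ[K] L) :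
    ψ ∈ Subgroup.zpowers (FiniteField.frobeniusAlgEquivOfAlgebraic K L) := by
  obtain ⟨n, rfl⟩ := (FiniteField.bijective_frobeniusAlgEquivOfAlgebraic_pow K L).2 ψ
  exact Subgroup.npow_mem_zpowers _ _

theorem AdjoinRoot.exists_algEquiv_root_eq {E : Type*} [Field E] {P : E[X]} [Fact (Irreducible P)]
    {y : AdjoinRoot P} (hy : aeval y P = 0) :
    ∃ ψ : AdjoinRoot P ≃ₐ[E] AdjoinRoot P, ψ (AdjoinRoot.root P) = y := by
  have := (AdjoinRoot.powerBasis (Fact.out : Irreducible P).ne_zero).finite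
  exact ⟨(Algebra.IsAlgebraic.algEquivEquivAlgHom E _).symm
    (AdjoinRoot.liftAlgHom P (Algebra.ofId E _) y hy), AdjoinRoot.liftAlgHom_root _ _ _ hy⟩

theorem AdjoinRoot.root_ne_zero {E : Type*} [Field E] {P : E[X]} [Fact (Irreducible P)]
    (h0 : P.eval 0 ≠ 0) : AdjoinRoot.root P ≠ 0 := fun hζ =>
  h0 <| (algebraMap E (AdjoinRoot P)).injective <| by
    rw [← coeff_zero_eq_eval_zero, coeff_zero_eq_aeval_zero', ← hζ, AdjoinRoot.aeval_eq,
      AdjoinRoot.mk_self, map_zero]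

theorem stmt_8_general (F E : Type*) [Field F] [Fintype F] [Field E] [Fintype E]
    [Algebra F E]
    (hcard : Fintype.card E = Fintype.card F ^ 2)
    (σ : E ≃ₐ[F] E) (hσ : σ ≠ AlgEquiv.refl)
    (P : E[X]) (hirr : Irreducible P) (h0 : P.eval 0 ≠ 0)
    (hsd : P = C (σ (P.eval 0))⁻¹ * (P.map (σ : E →+* E)).reverse) :
    Odd P.natDegree := by
  set q := Fintype.card F
  have hrank : Module.finrank F E = 2 :=
    Nat.pow_right_injective Fintype.one_lt_card (Module.card_eq_pow_finrank.symm.trans hcard)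
  have hσq : ∀ a, σ a = a ^ q := by
    rw [FiniteField.algEquiv_eq_frobenius_of_finrank_eq_two hrank hσ]
    exact fun _ => rfl
  have := Fact.mk hirr
  let pb := AdjoinRoot.powerBasis hirr.ne_zero
  have := pb.finite
  have : Finite (AdjoinRoot P) := Module.finite_of_finite E
  set ζ := AdjoinRoot.root P
  have hζ : aeval ζ P = 0 := by rw [AdjoinRoot.aeval_eq, AdjoinRoot.mk_self]
  have hroot : aeval (ζ ^ q)⁻¹ P = 0 :=
    aeval_inv_pow_card_eq_zero (F := F) hσq hsd (AdjoinRoot.root_ne_zero h0) hζ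
  obtain ⟨ψ, hψ⟩ := AdjoinRoot.exists_algEquiv_root_eq hroot
  let φ := FiniteField.frobeniusAlgEquivOfAlgebraic E (AdjoinRoot P)
  have hsq : ψ ^ 2 = φ := by
    refine AlgEquiv.coe_toAlgHom_injective (AdjoinRoot.algHom_ext ?_)
    change ψ (ψ ζ) = ζ ^ Fintype.card E
    rw [hψ, map_inv₀, map_pow, hψ, hcard, inv_pow, inv_inv, ← pow_mul, sq]
  have := odd_orderOf_of_sq_eq (FiniteField.mem_zpowers_frobeniusAlgEquivOfAlgebraic ψ) hsq
  rwa [FiniteField.orderOf_frobeniusAlgEquivOfAlgebraic, pb.finrank] at this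

theorem stmt_8 (F E : Type*) [Field F] [Fintype F] [Field E] [Fintype E]
    [Algebra F E] (hodd : Odd (Fintype.card F))
    (hcard : Fintype.card E = Fintype.card F ^ 2)
    (σ : E ≃ₐ[F] E) (hσ : σ ≠ AlgEquiv.refl)
    (P : E[X]) (hmonic : P.Monic) (hirr : Irreducible P) (h0 : P.eval 0 ≠ 0)
    (hsd : P = C (σ (P.eval 0))⁻¹ * (P.map (σ : E →+* E)).reverse) :
    Odd P.natDegree :=
  stmt_8_general F E hcard σ hσ P hirr h0 hsd
end
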